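/- Let d ≥ 2 be an integer, L > 0, k a real constant, U ⊆ ℝ² open, and f, r : U → ℝ twice continuously differentiable with r > 0 on U. Suppose T₊₊, T₋₋, T₊₋ : U → ℝ satisfy the reduced Einstein equations: r·T±±/(d−1) = −(∂±f)(∂±r) − ∂±∂±r and r·T₊₋/(d−1) = ∂₊∂₋r + ((d−2)/r)[ (e^{−f}/2)(k + r²/L²) + (∂₊r)(∂₋r) ] + (r/L²)e^{−f}, with T₊₊ ≥ 0, T₋₋ ≥ 0, T₊₋ ≥ 0 on U. Define μ = k r^{d−2} + 2 e^{f} r^{d−2} (∂₊r)(∂₋r) + r^{d}/L². Let γ = (γ⁺, γ⁻) : [0,1] → U be continuously differentiable with (γ⁺)′ ≥ 0 and (γ⁻)′ ≤ 0, suppose ∂₊r ≥ 0 and ∂₋r ≤ 0 at every point γ(t), and suppose the initial point is marginally trapped: ∂₊r(γ(0)) = 0. Then, writing r₀ = r(γ(0)), one has μ(γ(1)) ≥ k r₀^{d−2} + r₀^{d}/L². -/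

import Mathlib

/-- Partial derivative in the `x⁺` (first coordinate) direction. -/
noncomputable def dplus (g : ℝ × ℝ → ℝ) (x : ℝ × ℝ) : ℝ := fderiv ℝ g x (1, 0)

/-- Partial derivative in the `x⁻` (second coordinate) direction. -/
noncomputable def dminus (g : ℝ × ℝ → ℝ) (x : ℝ × ℝ) : ℝ := fderiv ℝ g x (0, 1)

/-!
By the reduced Einstein equations the partial derivatives of the mass function are
`∂₊μ = 2/(d-1) e^f r^(d-1) (∂₊r T₊₋ - ∂₋r T₊₊)` and `∂₋μ = 2/(d-1) e^f r^(d-1) (∂₋r T₊₋ - ∂₊r T₋₋)`.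
Under the dominant energy condition these give `∂₊μ ≥ 0 ≥ ∂₋μ` wherever `∂₊r ≥ 0 ≥ ∂₋r`, so `μ`
is nondecreasing along a curve moving forward in `x⁺` and backward in `x⁻`. At the marginally trapped
starting point the term `(∂₊r)(∂₋r)` of `μ` vanishes.
-/

open Set

noncomputable def mass (d : ℕ) (L k : ℝ) (f r : ℝ × ℝ → ℝ) (x : ℝ × ℝ) : ℝ :=
  k * r x ^ (d - 2) + 2 * Real.exp (f x) * r x ^ (d - 2) * dplus r x * dminus r x
    + r x ^ d / L ^ 2

theorem fderiv_apply_eq_dplus_add_dminus (g : ℝ × ℝ → ℝ) (x v : ℝ × ℝ) :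
    fderiv ℝ g x v = v.1 * dplus g x + v.2 * dminus g x := by
  conv_lhs => rw [show v = v.1 • ((1 : ℝ), (0 : ℝ)) + v.2 • ((0 : ℝ), (1 : ℝ)) by ext <;> simp]
  rw [map_add, map_smul, map_smul, smul_eq_mul, smul_eq_mul, dplus, dminus]

theorem fderiv_fderiv_apply {E F : Type*} [NormedAddCommGroup E] [NormedSpace ℝ E]
    [NormedAddCommGroup F] [NormedSpace ℝ F] {g : E → F} {x : E}
    (hg : DifferentiableAt ℝ (fderiv ℝ g) x) (v w : E) :
    fderiv ℝ (fun y => fderiv ℝ g y w) x v = fderiv ℝ (fderiv ℝ g) x v w := by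
  rw [fderiv_clm_apply hg (differentiableAt_const w)]
  simp

section Mass

variable {f r : ℝ × ℝ → ℝ} {x : ℝ × ℝ}

theorem ContDiffAt.dplus (hr : ContDiffAt ℝ 2 r x) : ContDiffAt ℝ 1 (dplus r) x :=
  (hr.fderiv_right le_rfl).clm_apply contDiffAt_const

theorem ContDiffAt.dminus (hr : ContDiffAt ℝ 2 r x) : ContDiffAt ℝ 1 (dminus r) x :=
  (hr.fderiv_right le_rfl).clm_apply contDiffAt_const

theorem dminus_dplus_eq_dplus_dminus (hr : ContDiffAt ℝ 2 r x) :
    dminus (dplus r) x = dplus (dminus r) x := by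
  have hr' : DifferentiableAt ℝ (fderiv ℝ r) x :=
    (hr.fderiv_right (m := 1) le_rfl).differentiableAt one_ne_zero
  change fderiv ℝ (fun y => fderiv ℝ r y (1, 0)) x (0, 1) =
    fderiv ℝ (fun y => fderiv ℝ r y (0, 1)) x (1, 0)
  rw [fderiv_fderiv_apply hr', fderiv_fderiv_apply hr']
  exact (hr.isSymmSndFDerivAt (by simp [minSmoothness_of_isRCLikeNormedField])).eq _ _

theorem hasFDerivAt_mass (n : ℕ) (L k : ℝ) (hf : DifferentiableAt ℝ f x)
    (hr : ContDiffAt ℝ 2 r x) :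
    HasFDerivAt (mass (n + 2) L k f r)
      ((n * r x ^ (n - 1) * (k + 2 * Real.exp (f x) * dplus r x * dminus r x)
          + (n + 2) * r x ^ (n + 1) / L ^ 2) • fderiv ℝ r x
        + (2 * Real.exp (f x) * r x ^ n) • ((dplus r x * dminus r x) • fderiv ℝ f x
          + dminus r x • fderiv ℝ (dplus r) x + dplus r x • fderiv ℝ (dminus r) x)) x := by
  have hr₁ := (hr.differentiableAt two_ne_zero).hasFDerivAt
  have hp := (hr.dplus.differentiableAt one_ne_zero).hasFDerivAt
  have hm := (hr.dminus.differentiableAt one_ne_zero).hasFDerivAt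
  have h := (((hr₁.pow n).const_mul k).add
    (((((hf.hasFDerivAt.exp).const_mul 2).mul (hr₁.pow n)).mul hp).mul hm)).add
    ((hr₁.pow (n + 2)).mul_const (L ^ 2)⁻¹)
  have hmass : mass (n + 2) L k f r = fun y => k * r y ^ n
      + 2 * Real.exp (f y) * r y ^ n * dplus r y * dminus r y + r y ^ (n + 2) * (L ^ 2)⁻¹ := by
    funext y
    simp only [mass, Nat.add_sub_cancel, div_eq_mul_inv]
  rw [hmass]
  refine h.congr_fderiv (ContinuousLinearMap.ext fun v => ?_)
  simp only [nsmul_eq_mul, Pi.mul_apply, smul_add, Nat.add_one_sub_one, Nat.cast_add,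
    Nat.cast_ofNat, add_apply, smul_apply, smul_eq_mul]
  ring

theorem differentiableAt_mass {d : ℕ} (L k : ℝ) (hd : 2 ≤ d) (hf : DifferentiableAt ℝ f x)
    (hr : ContDiffAt ℝ 2 r x) : DifferentiableAt ℝ (mass d L k f r) x := by
  obtain ⟨n, rfl⟩ := Nat.exists_eq_add_of_le' hd
  exact (hasFDerivAt_mass n L k hf hr).differentiableAt

/-- The algebra behind `dplus_mass_eq` and `dminus_mass_eq`: `a` is the derivative of `r` in the
direction of differentiation, `b` the transverse one, and `Da`, `Db` (their derivatives in that
direction) are eliminated through the field equations `ha` and `hb`. -/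
theorem mass_deriv_identity {n : ℕ} {L k ρ φ a b Dφ Da Db T T' : ℝ} (hρ : ρ ≠ 0)
    (ha : ρ * T / ((n : ℝ) + 1) = -Dφ * a - Da)
    (hb : ρ * T' / ((n : ℝ) + 1) =
      Db + (n / ρ) * (Real.exp (-φ) / 2 * (k + ρ ^ 2 / L ^ 2) + a * b)
        + ρ / L ^ 2 * Real.exp (-φ)) :
    (n * ρ ^ (n - 1) * (k + 2 * Real.exp φ * a * b) + (n + 2) * ρ ^ (n + 1) / L ^ 2) * a
      + 2 * Real.exp φ * ρ ^ n * (a * b * Dφ + b * Da + a * Db)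
      = 2 / (n + 1) * Real.exp φ * ρ ^ (n + 1) * (a * T' - b * T) := by
  have hDa : Da = -Dφ * a - ρ * T / (n + 1) := by linear_combination ha
  have hDb : Db = ρ * T' / (n + 1) - (n / ρ) * (Real.exp (-φ) / 2 * (k + ρ ^ 2 / L ^ 2) + a * b)
      - ρ / L ^ 2 * Real.exp (-φ) := by linear_combination -hb
  have hpow : (n : ℝ) * ρ ^ (n - 1) = n * ρ ^ n / ρ := by
    rcases eq_or_ne n 0 with rfl | hn₀
    · simp
    · rw [eq_div_iff hρ, mul_assoc, pow_sub_one_mul hn₀]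
  rw [hDa, hDb, hpow, Real.exp_neg]
  field_simp
  ring

theorem dplus_mass_eq {d : ℕ} {L k Tpp Tpm : ℝ} (hd : 2 ≤ d) (hf : DifferentiableAt ℝ f x)
    (hr : ContDiffAt ℝ 2 r x) (hrx : r x ≠ 0)
    (hEpp : r x * Tpp / ((d : ℝ) - 1) = -(dplus f x) * dplus r x - dplus (dplus r) x)
    (hEpm : r x * Tpm / ((d : ℝ) - 1) =
      dplus (dminus r) x + (((d : ℝ) - 2) / r x) *
        (Real.exp (-(f x)) / 2 * (k + r x ^ 2 / L ^ 2) + dplus r x * dminus r x)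
      + (r x / L ^ 2) * Real.exp (-(f x))) :
    dplus (mass d L k f r) x =
      2 / ((d : ℝ) - 1) * Real.exp (f x) * r x ^ (d - 1) * (dplus r x * Tpm - dminus r x * Tpp) := by
  obtain ⟨n, rfl⟩ := Nat.exists_eq_add_of_le' hd
  rw [show ((n + 2 : ℕ) : ℝ) - 1 = n + 1 by push_cast; ring] at hEpp hEpm ⊢
  rw [show ((n + 2 : ℕ) : ℝ) - 2 = n by push_cast; ring] at hEpm
  rw [show n + 2 - 1 = n + 1 by omega, dplus, (hasFDerivAt_mass n L k hf hr).fderiv]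
  simp only [add_apply, smul_apply, smul_eq_mul]
  exact mass_deriv_identity hrx hEpp hEpm

theorem dminus_mass_eq {d : ℕ} {L k Tmm Tpm : ℝ} (hd : 2 ≤ d) (hf : DifferentiableAt ℝ f x)
    (hr : ContDiffAt ℝ 2 r x) (hrx : r x ≠ 0)
    (hEmm : r x * Tmm / ((d : ℝ) - 1) = -(dminus f x) * dminus r x - dminus (dminus r) x)
    (hEpm : r x * Tpm / ((d : ℝ) - 1) =
      dplus (dminus r) x + (((d : ℝ) - 2) / r x) *
        (Real.exp (-(f x)) / 2 * (k + r x ^ 2 / L ^ 2) + dplus r x * dminus r x)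
      + (r x / L ^ 2) * Real.exp (-(f x))) :
    dminus (mass d L k f r) x =
      2 / ((d : ℝ) - 1) * Real.exp (f x) * r x ^ (d - 1) * (dminus r x * Tpm - dplus r x * Tmm) := by
  obtain ⟨n, rfl⟩ := Nat.exists_eq_add_of_le' hd
  rw [show ((n + 2 : ℕ) : ℝ) - 1 = n + 1 by push_cast; ring] at hEmm hEpm ⊢
  rw [show ((n + 2 : ℕ) : ℝ) - 2 = n by push_cast; ring, mul_comm (dplus r x),
    ← dminus_dplus_eq_dplus_dminus hr] at hEpm
  rw [show n + 2 - 1 = n + 1 by omega, dminus, (hasFDerivAt_mass n L k hf hr).fderiv]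
  simp only [add_apply, smul_apply, smul_eq_mul]
  have h := mass_deriv_identity hrx hEmm hEpm
  simp only [dminus] at h ⊢
  linear_combination h

theorem dplus_mass_nonneg {d : ℕ} {L k Tpp Tpm : ℝ} (hd : 2 ≤ d) (hf : DifferentiableAt ℝ f x)
    (hr : ContDiffAt ℝ 2 r x) (hrx : 0 < r x)
    (hEpp : r x * Tpp / ((d : ℝ) - 1) = -(dplus f x) * dplus r x - dplus (dplus r) x)
    (hEpm : r x * Tpm / ((d : ℝ) - 1) =
      dplus (dminus r) x + (((d : ℝ) - 2) / r x) *
        (Real.exp (-(f x)) / 2 * (k + r x ^ 2 / L ^ 2) + dplus r x * dminus r x)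
      + (r x / L ^ 2) * Real.exp (-(f x)))
    (hTpp : 0 ≤ Tpp) (hTpm : 0 ≤ Tpm) (hp : 0 ≤ dplus r x) (hm : dminus r x ≤ 0) :
    0 ≤ dplus (mass d L k f r) x := by
  rw [dplus_mass_eq hd hf hr hrx.ne' hEpp hEpm]
  have hd' : (0 : ℝ) < d - 1 := by rw [sub_pos]; exact_mod_cast hd
  have hT : 0 ≤ dplus r x * Tpm - dminus r x * Tpp := by nlinarith
  positivity

theorem dminus_mass_nonpos {d : ℕ} {L k Tmm Tpm : ℝ} (hd : 2 ≤ d) (hf : DifferentiableAt ℝ f x)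
    (hr : ContDiffAt ℝ 2 r x) (hrx : 0 < r x)
    (hEmm : r x * Tmm / ((d : ℝ) - 1) = -(dminus f x) * dminus r x - dminus (dminus r) x)
    (hEpm : r x * Tpm / ((d : ℝ) - 1) =
      dplus (dminus r) x + (((d : ℝ) - 2) / r x) *
        (Real.exp (-(f x)) / 2 * (k + r x ^ 2 / L ^ 2) + dplus r x * dminus r x)
      + (r x / L ^ 2) * Real.exp (-(f x)))
    (hTmm : 0 ≤ Tmm) (hTpm : 0 ≤ Tpm) (hp : 0 ≤ dplus r x) (hm : dminus r x ≤ 0) :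
    dminus (mass d L k f r) x ≤ 0 := by
  rw [dminus_mass_eq hd hf hr hrx.ne' hEmm hEpm]
  have hd' : (0 : ℝ) < d - 1 := by rw [sub_pos]; exact_mod_cast hd
  have hT : 0 ≤ dplus r x * Tmm - dminus r x * Tpm := by nlinarith
  rw [← neg_nonneg, ← mul_neg, neg_sub]
  positivity

end Mass

theorem monotoneOn_comp_of_dplus_nonneg_of_dminus_nonpos {g : ℝ × ℝ → ℝ} {γ₁ γ₂ : ℝ → ℝ}
    {a b : ℝ} (hγ₁ : ContinuousOn γ₁ (Icc a b)) (hγ₂ : ContinuousOn γ₂ (Icc a b))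
    (hγ₁' : DifferentiableOn ℝ γ₁ (Ioo a b)) (hγ₂' : DifferentiableOn ℝ γ₂ (Ioo a b))
    (hmono₁ : ∀ t ∈ Ioo a b, 0 ≤ deriv γ₁ t) (hanti₂ : ∀ t ∈ Ioo a b, deriv γ₂ t ≤ 0)
    (hg : ∀ t ∈ Icc a b, DifferentiableAt ℝ g (γ₁ t, γ₂ t))
    (hdplus : ∀ t ∈ Ioo a b, 0 ≤ dplus g (γ₁ t, γ₂ t))
    (hdminus : ∀ t ∈ Ioo a b, dminus g (γ₁ t, γ₂ t) ≤ 0) :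
    MonotoneOn (fun t => g (γ₁ t, γ₂ t)) (Icc a b) := by
  have hderiv : ∀ t ∈ Ioo a b, HasDerivAt (fun t => g (γ₁ t, γ₂ t))
      (deriv γ₁ t * dplus g (γ₁ t, γ₂ t) + deriv γ₂ t * dminus g (γ₁ t, γ₂ t)) t := by
    intro t ht
    have hγ := ((hγ₁'.differentiableAt (Ioo_mem_nhds ht.1 ht.2)).hasDerivAt).prodMk
      ((hγ₂'.differentiableAt (Ioo_mem_nhds ht.1 ht.2)).hasDerivAt)
    have h := (hg t (Ioo_subset_Icc_self ht)).hasFDerivAt.comp_hasDerivAt t hγ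
    rwa [fderiv_apply_eq_dplus_add_dminus] at h
  refine monotoneOn_of_deriv_nonneg (convex_Icc a b)
    (fun t ht => (hg t ht).continuousAt.comp_continuousWithinAt
      (f := fun t => (γ₁ t, γ₂ t)) ((hγ₁.prodMk hγ₂) t ht))
    ?_ ?_ <;> rw [interior_Icc]
  · exact fun t ht => (hderiv t ht).differentiableAt.differentiableWithinAt
  · intro t ht
    rw [(hderiv t ht).deriv]
    exact add_nonneg (mul_nonneg (hmono₁ t ht) (hdplus t ht))
      (mul_nonneg_of_nonpos_of_nonpos (hanti₂ t ht) (hdminus t ht))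

theorem mass_bound_from_marginally_trapped_general
    (d : ℕ) (hd : 2 ≤ d) (L k : ℝ)
    (U : Set (ℝ × ℝ)) (hU : IsOpen U)
    (f r : ℝ × ℝ → ℝ)
    (hf : ContDiffOn ℝ 2 f U) (hr : ContDiffOn ℝ 2 r U)
    (hrpos : ∀ x ∈ U, 0 < r x)
    (Tpp Tmm Tpm : ℝ × ℝ → ℝ)
    (hEpp : ∀ x ∈ U, r x * Tpp x / ((d : ℝ) - 1) =
      -(dplus f x) * dplus r x - dplus (dplus r) x)
    (hEmm : ∀ x ∈ U, r x * Tmm x / ((d : ℝ) - 1) =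
      -(dminus f x) * dminus r x - dminus (dminus r) x)
    (hEpm : ∀ x ∈ U, r x * Tpm x / ((d : ℝ) - 1) =
      dplus (dminus r) x + (((d : ℝ) - 2) / r x) *
        (Real.exp (-(f x)) / 2 * (k + r x ^ 2 / L ^ 2) + dplus r x * dminus r x)
      + (r x / L ^ 2) * Real.exp (-(f x)))
    (hTppnn : ∀ x ∈ U, 0 ≤ Tpp x) (hTmmnn : ∀ x ∈ U, 0 ≤ Tmm x)
    (hTpmnn : ∀ x ∈ U, 0 ≤ Tpm x)
    (μ : ℝ × ℝ → ℝ)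
    (hμ : ∀ x, μ x = k * r x ^ (d - 2)
      + 2 * Real.exp (f x) * r x ^ (d - 2) * dplus r x * dminus r x
      + r x ^ d / L ^ 2)
    (γp γm : ℝ → ℝ)
    (hγmem : ∀ t ∈ Set.Icc (0 : ℝ) 1, (γp t, γm t) ∈ U)
    (hγC1 : ContDiffOn ℝ 1 (fun t => (γp t, γm t)) (Set.Icc (0 : ℝ) 1))
    (hγp' : ∀ t ∈ Set.Icc (0 : ℝ) 1, 0 ≤ derivWithin γp (Set.Icc (0 : ℝ) 1) t)
    (hγm' : ∀ t ∈ Set.Icc (0 : ℝ) 1, derivWithin γm (Set.Icc (0 : ℝ) 1) t ≤ 0)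
    (huntrapped : ∀ t ∈ Set.Icc (0 : ℝ) 1,
      0 ≤ dplus r (γp t, γm t) ∧ dminus r (γp t, γm t) ≤ 0)
    (hmarg : dplus r (γp 0, γm 0) = 0) :
    μ (γp 1, γm 1) ≥ k * r (γp 0, γm 0) ^ (d - 2) + r (γp 0, γm 0) ^ d / L ^ 2 := by
  have hf' : ∀ x ∈ U, DifferentiableAt ℝ f x :=
    fun x hx => (hf.contDiffAt (hU.mem_nhds hx)).differentiableAt two_ne_zero
  have hr' : ∀ x ∈ U, ContDiffAt ℝ 2 r x := fun x hx => hr.contDiffAt (hU.mem_nhds hx)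
  have hsigns : ∀ t ∈ Icc (0 : ℝ) 1, 0 ≤ dplus (mass d L k f r) (γp t, γm t) ∧
      dminus (mass d L k f r) (γp t, γm t) ≤ 0 := by
    intro t ht
    have hx := hγmem t ht
    obtain ⟨hp, hm⟩ := huntrapped t ht
    exact ⟨dplus_mass_nonneg hd (hf' _ hx) (hr' _ hx) (hrpos _ hx) (hEpp _ hx) (hEpm _ hx)
        (hTppnn _ hx) (hTpmnn _ hx) hp hm,
      dminus_mass_nonpos hd (hf' _ hx) (hr' _ hx) (hrpos _ hx) (hEmm _ hx) (hEpm _ hx)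
        (hTmmnn _ hx) (hTpmnn _ hx) hp hm⟩
  have hderivWithin (g : ℝ → ℝ) : ∀ t ∈ Ioo (0 : ℝ) 1, derivWithin g (Icc 0 1) t = deriv g t :=
    fun t ht => derivWithin_of_mem_nhds (Icc_mem_nhds ht.1 ht.2)
  have hγ' := (hγC1.differentiableOn one_ne_zero).mono Ioo_subset_Icc_self
  have hmono : MonotoneOn (fun t => mass d L k f r (γp t, γm t)) (Icc 0 1) :=
    monotoneOn_comp_of_dplus_nonneg_of_dminus_nonpos hγC1.continuousOn.fst
      hγC1.continuousOn.snd hγ'.fst hγ'.snd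
      (fun t ht => hderivWithin γp t ht ▸ hγp' t (Ioo_subset_Icc_self ht))
      (fun t ht => hderivWithin γm t ht ▸ hγm' t (Ioo_subset_Icc_self ht))
      (fun t ht => differentiableAt_mass L k hd (hf' _ (hγmem t ht)) (hr' _ (hγmem t ht)))
      (fun t ht => (hsigns t (Ioo_subset_Icc_self ht)).1)
      (fun t ht => (hsigns t (Ioo_subset_Icc_self ht)).2)
  calc μ (γp 1, γm 1) = mass d L k f r (γp 1, γm 1) := hμ _
    _ ≥ mass d L k f r (γp 0, γm 0) := hmono (left_mem_Icc.2 zero_le_one)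
        (right_mem_Icc.2 zero_le_one) zero_le_one
    _ = k * r (γp 0, γm 0) ^ (d - 2) + r (γp 0, γm 0) ^ d / L ^ 2 := by simp [mass, hmarg]

theorem mass_bound_from_marginally_trapped
    (d : ℕ) (hd : 2 ≤ d) (L k : ℝ) (hL : 0 < L)
    (U : Set (ℝ × ℝ)) (hU : IsOpen U)
    (f r : ℝ × ℝ → ℝ)
    (hf : ContDiffOn ℝ 2 f U) (hr : ContDiffOn ℝ 2 r U)
    (hrpos : ∀ x ∈ U, 0 < r x)
    (Tpp Tmm Tpm : ℝ × ℝ → ℝ)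
    (hEpp : ∀ x ∈ U, r x * Tpp x / ((d : ℝ) - 1) =
      -(dplus f x) * dplus r x - dplus (dplus r) x)
    (hEmm : ∀ x ∈ U, r x * Tmm x / ((d : ℝ) - 1) =
      -(dminus f x) * dminus r x - dminus (dminus r) x)
    (hEpm : ∀ x ∈ U, r x * Tpm x / ((d : ℝ) - 1) =
      dplus (dminus r) x + (((d : ℝ) - 2) / r x) *
        (Real.exp (-(f x)) / 2 * (k + r x ^ 2 / L ^ 2) + dplus r x * dminus r x)
      + (r x / L ^ 2) * Real.exp (-(f x)))
    (hTppnn : ∀ x ∈ U, 0 ≤ Tpp x) (hTmmnn : ∀ x ∈ U, 0 ≤ Tmm x)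
    (hTpmnn : ∀ x ∈ U, 0 ≤ Tpm x)
    (μ : ℝ × ℝ → ℝ)
    (hμ : ∀ x, μ x = k * r x ^ (d - 2)
      + 2 * Real.exp (f x) * r x ^ (d - 2) * dplus r x * dminus r x
      + r x ^ d / L ^ 2)
    (γp γm : ℝ → ℝ)
    (hγmem : ∀ t ∈ Set.Icc (0 : ℝ) 1, (γp t, γm t) ∈ U)
    (hγC1 : ContDiffOn ℝ 1 (fun t => (γp t, γm t)) (Set.Icc (0 : ℝ) 1))
    (hγp' : ∀ t ∈ Set.Icc (0 : ℝ) 1, 0 ≤ derivWithin γp (Set.Icc (0 : ℝ) 1) t)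
    (hγm' : ∀ t ∈ Set.Icc (0 : ℝ) 1, derivWithin γm (Set.Icc (0 : ℝ) 1) t ≤ 0)
    (huntrapped : ∀ t ∈ Set.Icc (0 : ℝ) 1,
      0 ≤ dplus r (γp t, γm t) ∧ dminus r (γp t, γm t) ≤ 0)
    (hmarg : dplus r (γp 0, γm 0) = 0) :
    μ (γp 1, γm 1) ≥ k * r (γp 0, γm 0) ^ (d - 2) + r (γp 0, γm 0) ^ d / L ^ 2 :=
  mass_bound_from_marginally_trapped_general d hd L k U hU f r hf hr hrpos Tpp Tmm Tpm hEpp hEmm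
    hEpm hTppnn hTmmnn hTpmnn μ hμ γp γm hγmem hγC1 hγp' hγm' huntrapped hmarg
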